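/- Let G be a directed graph with positive integer edge weights and let s,t be vertices with dist_G(s,t) < ∞. Let P ⊇ {v : v lies on some shortest s-t path}. The greedy procedure that sorts P by dist_G(s,·) in ascending order, starts with v_last = s, and appends each scanned vertex v satisfying len_G(v_last,v) + dist_G(v,t) = dist_G(v_last,t) (updating v_last ← v), outputs a shortest s-t path in G. -/

import Mathlib

open scoped ENNReal Classical

variable {V : Type*}

/-- Length of a walk (list of vertices) given edge weights `len`
(`len u v = ∞` means the edge `(u,v)` is absent). -/
noncomputable def walkLen (len : V → V → ℝ≥0∞) : List V → ℝ≥0∞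
  | [] => 0
  | [_] => 0
  | u :: v :: rest => len u v + walkLen len (v :: rest)

/-- `p` is a walk starting at `s` and ending at `t`. -/
def IsWalkFromTo (s t : V) (p : List V) : Prop :=
  p.head? = some s ∧ p.getLast? = some t

/-- Shortest-path distance: infimum of lengths of walks from `s` to `t`. -/
noncomputable def gdist (len : V → V → ℝ≥0∞) (s t : V) : ℝ≥0∞ :=
  ⨅ (p : List V) (_ : IsWalkFromTo s t p), walkLen len p

/-- The greedy scan: given the target `t`, a current last vertex and the
remaining sorted queue, append a scanned vertex `v` whenever
`len(v_last,v) + dist(v,t) = dist(v_last,t)`. -/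
noncomputable def greedy (len : V → V → ℝ≥0∞) (t : V) : V → List V → List V
  | _, [] => []
  | vlast, v :: rest =>
    if len vlast v + gdist len v t = gdist len vlast t then
      v :: greedy len t v rest
    else
      greedy len t vlast rest

/-! Integer weights make every finite distance attained, so every vertex `u ≠ t` with
`dist(u,t) < ∞` has a tight edge `(u,w)`, i.e. `len(u,w) + dist(w,t) = dist(u,t)`.
The scan keeps the invariant that `v_last` lies on a shortest `s`-`t` path and that all its
tight successors are still ahead in the queue. A tight successor `w` of a vertex `v` on a
shortest path lies on one again, with `dist(s,w) = dist(s,v) + len(v,w) > dist(s,v)`; by the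
sorting it therefore comes after `v` in the queue. When the queue is exhausted, `v_last` has no
tight successor left, so it is `t`. -/

theorem List.Pairwise.mem_of_cons_suffix_of_lt {α β : Type*} [Preorder β] {f : α → β}
    {q l : List α} {v w : α} (hq : q.Pairwise fun a b => f a ≤ f b) (hsuf : v :: l <:+ q)
    (hw : w ∈ q) (hlt : f v < f w) : w ∈ l := by
  obtain ⟨pre, rfl⟩ := hsuf
  rcases List.mem_append.mp hw with hpre | hvl
  · exact absurd ((List.pairwise_append.mp hq).2.2 w hpre v List.mem_cons_self) hlt.not_ge
  · exact (List.mem_cons.mp hvl).resolve_left (by rintro rfl; exact lt_irrefl _ hlt)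

section ShortestPaths

variable {len : V → V → ℝ≥0∞}

theorem gdist_le_walkLen {u v : V} {p : List V} (hp : IsWalkFromTo u v p) :
    gdist len u v ≤ walkLen len p :=
  iInf₂_le p hp

theorem gdist_self (v : V) : gdist len v v = 0 :=
  nonpos_iff_eq_zero.mp (gdist_le_walkLen (p := [v]) ⟨rfl, rfl⟩)

theorem gdist_le_len (u v : V) : gdist len u v ≤ len u v :=
  (gdist_le_walkLen (p := [u, v]) ⟨rfl, rfl⟩).trans_eq (by simp [walkLen])

theorem walkLen_append {p : List V} {v : V} (hp : p.getLast? = some v) (q : List V) :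
    walkLen len (p ++ q) = walkLen len p + walkLen len (v :: q) := by
  induction p with
  | nil => simp at hp
  | cons a p ih =>
    cases p with
    | nil => simp only [List.getLast?_singleton, Option.some.injEq] at hp; simp [hp, walkLen]
    | cons b l =>
      rw [List.getLast?_cons_cons] at hp
      rw [List.cons_append, List.cons_append, walkLen, ← List.cons_append, ih hp, walkLen,
        add_assoc]

theorem IsWalkFromTo.append {u v w : V} {p q : List V} (hp : IsWalkFromTo u v p)
    (hq : IsWalkFromTo v w (v :: q)) : IsWalkFromTo u w (p ++ q) := by
  obtain ⟨hhead, hlast⟩ := hp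
  obtain ⟨-, hq⟩ := hq
  obtain _ | ⟨a, p⟩ := p
  · simp at hhead
  refine ⟨by simpa using hhead, ?_⟩
  rw [List.getLast?_append]
  obtain _ | ⟨b, q⟩ := q
  · simp_all
  · rw [List.getLast?_cons_cons] at hq
    simp [hq]

theorem gdist_triangle (u v w : V) : gdist len u w ≤ gdist len u v + gdist len v w := by
  simp only [gdist, ENNReal.iInf_add, ENNReal.add_iInf]
  refine le_iInf₂ fun r hr => le_iInf₂ fun p hp => ?_
  obtain _ | ⟨a, q⟩ := r
  · simp [IsWalkFromTo] at hr
  obtain rfl : a = v := by simpa [IsWalkFromTo] using hr.1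
  rw [← walkLen_append hp.2]
  exact gdist_le_walkLen (hp.append hr)

theorem gdist_le_len_add (u w t : V) : gdist len u t ≤ len u w + gdist len w t :=
  (gdist_triangle u w t).trans (by gcongr; exact gdist_le_len u w)

theorem gdist_le_add_len (s u w : V) : gdist len s w ≤ gdist len s u + len u w :=
  (gdist_triangle s u w).trans (by gcongr; exact gdist_le_len u w)

end ShortestPaths

section IntegerWeights

variable {len : V → V → ℝ≥0∞} (hnat : ∀ u v, len u v ≠ ∞ → ∃ k : ℕ, len u v = k)
include hnat

theorem exists_nat_eq_walkLen : ∀ p : List V, walkLen len p ≠ ∞ → ∃ n : ℕ, walkLen len p = n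
  | [], _ | [_], _ => ⟨0, by simp [walkLen]⟩
  | a :: b :: l, h => by
    rw [walkLen, ENNReal.add_ne_top] at h
    obtain ⟨k, hk⟩ := hnat a b h.1
    obtain ⟨n, hn⟩ := exists_nat_eq_walkLen (b :: l) h.2
    exact ⟨k + n, by rw [walkLen, hk, hn, Nat.cast_add]⟩

theorem exists_walkLen_eq_gdist {u v : V} (h : gdist len u v ≠ ∞) :
    ∃ p, IsWalkFromTo u v p ∧ walkLen len p = gdist len u v := by
  have hS : ∃ n : ℕ, ∃ p, IsWalkFromTo u v p ∧ walkLen len p = n := by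
    have := lt_top_iff_ne_top.mpr h
    simp only [gdist, iInf_lt_iff] at this
    obtain ⟨p, hp, hlt⟩ := this
    obtain ⟨n, hn⟩ := exists_nat_eq_walkLen hnat p hlt.ne
    exact ⟨n, p, hp, hn⟩
  obtain ⟨p, hp, hpn⟩ := Nat.find_spec hS
  refine ⟨p, hp, le_antisymm ?_ (gdist_le_walkLen hp)⟩
  rw [hpn]
  refine le_iInf₂ fun r hr => ?_
  obtain hr_top | hr_fin := eq_or_ne (walkLen len r) ∞
  · simp [hr_top]
  obtain ⟨n, hn⟩ := exists_nat_eq_walkLen hnat r hr_fin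
  rw [hn]
  exact_mod_cast Nat.find_min' hS ⟨r, hr, hn⟩

theorem exists_len_add_gdist_eq {u t : V} (h : gdist len u t ≠ ∞) (hne : u ≠ t) :
    ∃ w, len u w + gdist len w t = gdist len u t := by
  obtain ⟨p, ⟨hhead, hlast⟩, hp⟩ := exists_walkLen_eq_gdist hnat h
  obtain _ | ⟨a, _ | ⟨w, l⟩⟩ := p
  · simp at hhead
  · simp_all
  obtain rfl : a = u := by simpa using hhead
  rw [List.getLast?_cons_cons] at hlast
  refine ⟨w, le_antisymm ?_ (gdist_le_len_add a w t)⟩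
  calc len a w + gdist len w t ≤ len a w + walkLen len (w :: l) := by
        gcongr; exact gdist_le_walkLen ⟨rfl, hlast⟩
    _ = gdist len a t := hp

end IntegerWeights

section Greedy

variable {len : V → V → ℝ≥0∞} {s t u w : V}

theorem gdist_add_gdist_eq_of_tight (hu : gdist len s u + gdist len u t = gdist len s t)
    (hw : len u w + gdist len w t = gdist len u t) :
    gdist len s w + gdist len w t = gdist len s t := by
  refine le_antisymm ?_ (gdist_triangle s w t)
  calc gdist len s w + gdist len w t ≤ gdist len s u + len u w + gdist len w t := by
        gcongr; exact gdist_le_add_len s u w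
    _ = gdist len s t := by rw [add_assoc, hw, hu]

theorem gdist_lt_gdist_of_tight (hpos : ∀ u v, len u v ≠ 0) (hfin : gdist len s t ≠ ∞)
    (hu : gdist len s u + gdist len u t = gdist len s t)
    (hw : len u w + gdist len w t = gdist len u t) :
    gdist len s u < gdist len s w := by
  have hsu : gdist len s u ≠ ∞ := ne_top_of_le_ne_top hfin (hu ▸ le_self_add)
  have hut : gdist len u t ≠ ∞ := ne_top_of_le_ne_top hfin (hu ▸ le_add_self)
  have hwt : gdist len w t ≠ ∞ := ne_top_of_le_ne_top hut (hw ▸ le_add_self)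
  calc gdist len s u < gdist len s u + len u w := ENNReal.lt_add_right hsu (hpos u w)
    _ ≤ gdist len s w := by
      rw [← ENNReal.add_le_add_iff_right hwt, add_assoc, hw, hu]
      exact gdist_triangle s w t

theorem greedy_isWalkFromTo_and_walkLen_eq (hnat : ∀ u v, len u v ≠ ∞ → ∃ k : ℕ, len u v = k)
    (hpos : ∀ u v, len u v ≠ 0) (hfin : gdist len s t ≠ ∞) {q : List V}
    (hsorted : q.Pairwise fun u v => gdist len s u ≤ gdist len s v)
    (hall : ∀ v, gdist len s v + gdist len v t = gdist len s t → v ∈ q) :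
    ∀ {rest : List V} {u : V}, rest <:+ q → gdist len s u + gdist len u t = gdist len s t →
      (∀ w, len u w + gdist len w t = gdist len u t → w ∈ rest) →
      IsWalkFromTo u t (u :: greedy len t u rest) ∧
        walkLen len (u :: greedy len t u rest) = gdist len u t
  | [], u, _, hu, hsucc => by
    obtain rfl : u = t := by
      by_contra hne
      obtain ⟨w, hw⟩ := exists_len_add_gdist_eq hnat
        (ne_top_of_le_ne_top hfin (hu ▸ le_add_self)) hne
      exact List.not_mem_nil (hsucc w hw)
    exact ⟨⟨rfl, rfl⟩, by simp [greedy, walkLen, gdist_self]⟩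
  | v :: rest, u, hsuf, hu, hsucc => by
    have hsuf' : rest <:+ q := (List.suffix_cons v rest).trans hsuf
    by_cases hv : len u v + gdist len v t = gdist len u t
    · have hv' := gdist_add_gdist_eq_of_tight hu hv
      have hsucc' (w : V) (hw : len v w + gdist len w t = gdist len v t) : w ∈ rest :=
        hsorted.mem_of_cons_suffix_of_lt hsuf (hall w (gdist_add_gdist_eq_of_tight hv' hw))
          (gdist_lt_gdist_of_tight hpos hfin hv' hw)
      obtain ⟨⟨-, hlast⟩, hlen⟩ :=
        greedy_isWalkFromTo_and_walkLen_eq hnat hpos hfin hsorted hall hsuf' hv' hsucc'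
      rw [greedy, if_pos hv]
      exact ⟨⟨rfl, by rwa [List.getLast?_cons_cons]⟩, by rw [walkLen, hlen, hv]⟩
    · rw [greedy, if_neg hv]
      refine greedy_isWalkFromTo_and_walkLen_eq hnat hpos hfin hsorted hall hsuf' hu
        fun w hw => (List.mem_cons.mp (hsucc w hw)).resolve_left ?_
      rintro rfl
      exact hv hw

end Greedy

theorem stmt_8_general (len : V → V → ℝ≥0∞)
    (hint : ∀ u v, len u v = ∞ ∨ ∃ k : ℕ, 0 < k ∧ len u v = (k : ℝ≥0∞))
    (s t : V) (hfin : gdist len s t ≠ ∞)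
    (q : List V)
    (hsorted : q.Pairwise fun u v => gdist len s u ≤ gdist len s v)
    (hall : ∀ v, gdist len s v + gdist len v t = gdist len s t → v ∈ q) :
    IsWalkFromTo s t (s :: greedy len t s q) ∧
      walkLen len (s :: greedy len t s q) = gdist len s t := by
  have hnat (u v : V) (h : len u v ≠ ∞) : ∃ k : ℕ, len u v = k :=
    ((hint u v).resolve_left h).imp fun _ hk => hk.2
  have hpos (u v : V) : len u v ≠ 0 := by
    rcases hint u v with h | ⟨k, hk, h⟩
    · simp [h]
    · simpa [h] using hk.ne'
  have hs : gdist len s s + gdist len s t = gdist len s t := by rw [gdist_self, zero_add]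
  exact greedy_isWalkFromTo_and_walkLen_eq hnat hpos hfin hsorted hall List.suffix_rfl hs
    fun w hw => hall w (gdist_add_gdist_eq_of_tight hs hw)

/-- correctness of the greedy shortest-path reconstruction on a
directed graph with positive integer weights: scanning a superset of the
shortest-path vertices sorted by `dist(s,·)` in ascending order yields a
shortest `s`-`t` path. -/
theorem stmt_8 [Fintype V] (len : V → V → ℝ≥0∞)
    (hint : ∀ u v, len u v = ∞ ∨ ∃ k : ℕ, 0 < k ∧ len u v = (k : ℝ≥0∞))
    (s t : V) (hfin : gdist len s t ≠ ∞)
    (q : List V) (hnodup : q.Nodup)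
    (hsorted : q.Pairwise fun u v => gdist len s u ≤ gdist len s v)
    (hall : ∀ v, gdist len s v + gdist len v t = gdist len s t → v ∈ q) :
    IsWalkFromTo s t (s :: greedy len t s q) ∧
      walkLen len (s :: greedy len t s q) = gdist len s t :=
  stmt_8_general len hint s t hfin q hsorted hall
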